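/- arXiv:math/0103209 — 3 statements merged into one kernel-verified Lean document; each statement's English description precedes it below -/
import Mathlib

section
/- Let β < 0 and ω ≠ 0 be real constants, and let (c_n)_{n≥0} be a real sequence with c₀ ≥ 0, c₁ = 0, c₂ ≥ 0, satisfying the recursion (n+1)(n+2)·c_{n+2} = n²·c_n − (β/ω²)·∑_{r=0}^{n} c_r·c_{n−r} for all n ≥ 1. Then c_n ≥ 0 for every n ≥ 0. -/
/-- If `β < 0`, `ω ≠ 0`, and the sequence `(cₙ)` satisfies recursion (7) with
`c₀ ≥ 0`, `c₁ = 0`, `c₂ ≥ 0`, then all coefficients `cₙ` are nonnegative. -/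
theorem stmt_1 (β ω : ℝ) (hβ : β < 0) (hω : ω ≠ 0) (c : ℕ → ℝ)
    (h0 : 0 ≤ c 0) (h1 : c 1 = 0) (h2 : 0 ≤ c 2)
    (hrec : ∀ n : ℕ, 1 ≤ n →
      ((n : ℝ) + 1) * ((n : ℝ) + 2) * c (n + 2)
        = (n : ℝ) ^ 2 * c n
          - (β / ω ^ 2) * ∑ r ∈ Finset.range (n + 1), c r * c (n - r)) :
    ∀ n : ℕ, 0 ≤ c n := by
  intro n
  induction n using Nat.strong_induction_on with
  | _ n ih =>
    match n, ih with
    | 0, _ => exact h0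
    | 1, _ => exact h1.ge
    | 2, _ => exact h2
    | (m + 3), ih =>
      have hm : 1 ≤ m + 1 := Nat.le_add_left 1 m
      have hrec' := hrec (m + 1) hm
      have hpos : (0:ℝ) < ((m + 1 : ℕ) + 1) * ((m + 1 : ℕ) + 2) := by
        positivity
      have hsum : 0 ≤ ∑ r ∈ Finset.range (m + 2), c r * c (m + 1 - r) := by
        apply Finset.sum_nonneg
        intro r hr
        have hr' : r < m + 2 := Finset.mem_range.mp hr
        exact mul_nonneg (ih r (by omega)) (ih (m + 1 - r) (by omega))
      have hβω : β / ω ^ 2 < 0 :=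
        div_neg_of_neg_of_pos hβ (by positivity)
      have hcn : 0 ≤ c (m + 1) := ih (m + 1) (by omega)
      have hrhs : 0 ≤ ((m + 1 : ℕ) : ℝ) ^ 2 * c (m + 1)
          - (β / ω ^ 2) * ∑ r ∈ Finset.range (m + 2), c r * c (m + 1 - r) := by
        have : 0 ≤ -(β / ω ^ 2) * ∑ r ∈ Finset.range (m + 2), c r * c (m + 1 - r) :=
          mul_nonneg (by linarith) hsum
        have h2 : 0 ≤ ((m + 1 : ℕ) : ℝ) ^ 2 * c (m + 1) := by positivity
        nlinarith
      have : (m + 1) + 2 = m + 3 := by omega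
      rw [this] at hrec'
      nlinarith
end

section
/- Let α be a real number with 1 < α ≤ 3/2 and let p ≥ 2 be an integer. Then ∑_{r=1}^{p−1} 1/(r^{α}·(p−r)^{α}) ≤ 1/(p−1)^{α−1}. -/
/-- Convolution estimate: for `1 < α ≤ 3/2` and integers `p ≥ 2`,
`∑_{r=1}^{p-1} 1/(r^α (p-r)^α) ≤ 1/(p-1)^(α-1)`. -/
theorem stmt_6 (α : ℝ) (hα1 : 1 < α) (hα2 : α ≤ 3 / 2) (p : ℕ) (hp : 2 ≤ p) :
    ∑ r ∈ Finset.Ico 1 p, 1 / ((r : ℝ) ^ α * ((p : ℝ) - (r : ℝ)) ^ α)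
      ≤ 1 / ((p : ℝ) - 1) ^ (α - 1) := by
  have hq : (0 : ℝ) < (p : ℝ) - 1 := by
    have : (2 : ℝ) ≤ (p : ℝ) := by exact_mod_cast hp
    linarith
  have hα0 : (0 : ℝ) < α := by linarith
  have key : ∀ r ∈ Finset.Ico 1 p,
      1 / ((r : ℝ) ^ α * ((p : ℝ) - (r : ℝ)) ^ α) ≤ 1 / ((p : ℝ) - 1) ^ α := by
    intro r hr
    rw [Finset.mem_Ico] at hr
    have hr1 : (1 : ℝ) ≤ (r : ℝ) := by exact_mod_cast hr.1
    have hrp : (r : ℝ) + 1 ≤ (p : ℝ) := by exact_mod_cast hr.2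
    have hpr1 : (1 : ℝ) ≤ (p : ℝ) - (r : ℝ) := by linarith
    have hmul : (p : ℝ) - 1 ≤ (r : ℝ) * ((p : ℝ) - (r : ℝ)) := by nlinarith
    have hrpos : (0 : ℝ) < (r : ℝ) := by linarith
    have hprpos : (0 : ℝ) < (p : ℝ) - (r : ℝ) := by linarith
    rw [← Real.mul_rpow hrpos.le hprpos.le]
    apply one_div_le_one_div_of_le (Real.rpow_pos_of_pos hq α)
    exact Real.rpow_le_rpow hq.le hmul hα0.le
  calc ∑ r ∈ Finset.Ico 1 p, 1 / ((r : ℝ) ^ α * ((p : ℝ) - (r : ℝ)) ^ α)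
      ≤ ∑ r ∈ Finset.Ico 1 p, 1 / ((p : ℝ) - 1) ^ α := Finset.sum_le_sum key
    _ = (p - 1 : ℕ) * (1 / ((p : ℝ) - 1) ^ α) := by
        rw [Finset.sum_const, Nat.card_Ico, nsmul_eq_mul]
    _ = 1 / ((p : ℝ) - 1) ^ (α - 1) := by
        have hcast : ((p - 1 : ℕ) : ℝ) = (p : ℝ) - 1 := by
          have := Nat.cast_sub (by omega : 1 ≤ p) (R := ℝ)
          simpa using this
        rw [hcast, Real.rpow_sub hq, Real.rpow_one]
        field_simp
end

section
/- Let β ≠ 0 and ω ≠ 0 be real constants and let (c_n)_{n≥0} be a real sequence with c₀ = −ω²/(2β), c₁ = 0, c₂ = 0, satisfying (n+1)(n+2)·c_{n+2} = n²·c_n − (β/ω²)·∑_{r=0}^{n} c_r·c_{n−r} for all n ≥ 1. Then c_n = 0 for every n ≥ 1; that is, the sine-power series reduces to the constant (trivial) solution v ≡ −ω²/(2β), corresponding to u ≡ −ω²/β. -/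
/-- For the trivial solution data `c₀ = -ω²/(2β)`, `c₁ = 0`, `c₂ = 0`, recursion (7)
forces `cₙ = 0` for all `n ≥ 1`: the sine-power series reduces to the constant
solution `v ≡ -ω²/(2β)` (i.e. `u ≡ -ω²/β`). -/
theorem stmt_11 (β ω : ℝ) (hβ : β ≠ 0) (hω : ω ≠ 0) (c : ℕ → ℝ)
    (h0 : c 0 = -ω ^ 2 / (2 * β)) (h1 : c 1 = 0) (h2 : c 2 = 0)
    (hrec : ∀ n : ℕ, 1 ≤ n →
      ((n : ℝ) + 1) * ((n : ℝ) + 2) * c (n + 2)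
        = (n : ℝ) ^ 2 * c n
          - (β / ω ^ 2) * ∑ r ∈ Finset.range (n + 1), c r * c (n - r)) :
    ∀ n : ℕ, 1 ≤ n → c n = 0 := by
  intro n
  induction n using Nat.strong_induction_on with
  | _ n ih =>
    intro hn
    match n, hn with
    | 1, _ => exact h1
    | 2, _ => exact h2
    | (m+3), _ =>
      have hcm : c (m+1) = 0 := ih (m+1) (by omega) (by omega)
      have hr := hrec (m+1) (by omega)
      have hsum : ∑ r ∈ Finset.range (m+1+1), c r * c (m+1-r) = 0 := by
        apply Finset.sum_eq_zero
        intro r hr'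
        simp only [Finset.mem_range] at hr'
        rcases Nat.eq_zero_or_pos r with h | h
        · subst h; simp [hcm]
        · rcases eq_or_lt_of_le (Nat.lt_succ_iff.mp hr') with h' | h'
          · rw [h', hcm]; ring
          · rw [ih r (by omega) h]; ring
      rw [hsum, hcm] at hr
      have hne : ((m:ℝ)+1+1) * ((m:ℝ)+1+2) ≠ 0 := by positivity
      have hz : ((m:ℝ)+1+1) * ((m:ℝ)+1+2) * c (m+1+2) = 0 := by
        push_cast at hr ⊢; linarith
      have : c (m+1+2) = 0 := (mul_eq_zero.mp hz).resolve_left hne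
      simpa using this
end
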